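/- For the bump allocator, all allocated regions recorded in the allocation map after a feasible sequence are pairwise disjoint: if (a,k;i) and (a',k';i') are in Φ₁ with i ≠ i', then [a,a+k) ∩ [a',a'+k') = ∅. -/

import Mathlib

inductive SymbEvent : Type
  | malloc (k : ℕ)
  | mfail (k : ℕ)
  | free (z : ℕ)
deriving DecidableEq

/-- Auxiliary: freeIndex on the reversed sequence. -/
def freeIndexRev : List SymbEvent → ℕ → Option ℕ
  | [], _ => none
  | SymbEvent.malloc _ :: rest, 0 => some (rest.length + 1)
  | SymbEvent.malloc _ :: rest, z + 1 => freeIndexRev rest z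
  | SymbEvent.mfail _ :: rest, z => freeIndexRev rest z
  | SymbEvent.free _ :: rest, z => freeIndexRev rest z

/-- `freeIndex σ z`: 1-based index of the `z`-th successful malloc counting backwards. -/
def freeIndex (σ : List SymbEvent) (z : ℕ) : Option ℕ := freeIndexRev σ.reverse z

/-- `MallocFreeRel σ i j`: the free event at (1-based) position `j` corresponds to
the malloc at position `i`. -/
def MallocFreeRel (σ : List SymbEvent) (i j : ℕ) : Prop :=
  (∃ k, σ[i - 1]? = some (SymbEvent.malloc k)) ∧
  ∃ z, σ[j - 1]? = some (SymbEvent.free z) ∧ freeIndex (σ.take (j - 1)) z = some i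

/-- Well-formedness of a symbolic allocation sequence: every free event has a
matching malloc, and no malloc is matched by two different frees. -/
def WellFormedSeq (σ : List SymbEvent) : Prop :=
  (∀ j z, σ[j - 1]? = some (SymbEvent.free z) → ∃ i, MallocFreeRel σ i j) ∧
  (∀ i j j', MallocFreeRel σ i j → MallocFreeRel σ i j' → j = j')

/-- A heap: a partial function from addresses to integer values. -/
abbrev Heap := ℕ → Option ℤ

/-- Allocation map: set of triples (address, size, index-in-sequence). -/
abbrev AllocMap := Set (ℕ × ℕ × ℕ)

/-- Addresses covered by an allocation map. -/
def addrsOf (Φ : AllocMap) : Set ℕ :=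
  {x | ∃ p ∈ Φ, p.1 ≤ x ∧ x < p.1 + p.2.1}

/-- An allocation strategy with allocator-state type `A`. -/
structure Strategy (A : Type) where
  null : ℕ
  init : Heap → Heap × A
  malloc : Heap → A → ℕ → Heap × A × ℕ
  free : Heap → A → ℕ → Heap × A

/-- Step feasibility (play relation). -/
inductive Step {A : Type} (α : Strategy A) :
    AllocMap → Heap → A → List SymbEvent → SymbEvent → Heap → A → AllocMap → Prop
  | mallocOk {Φ : AllocMap} {H : Heap} {st : A} {σ : List SymbEvent}
      {k : ℕ} {H' : Heap} {st' : A} {a : ℕ} :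
      α.malloc H st k = (H', st', a) → a ≠ α.null →
      Step α Φ H st σ (SymbEvent.malloc k) H' st' (Φ ∪ {(a, k, σ.length + 1)})
  | mallocFail {Φ : AllocMap} {H : Heap} {st : A} {σ : List SymbEvent}
      {k : ℕ} {H' : Heap} {st' : A} {a : ℕ} :
      α.malloc H st k = (H', st', a) → a = α.null →
      Step α Φ H st σ (SymbEvent.mfail k) H' st' Φ
  | free {Φ : AllocMap} {H : Heap} {st : A} {σ : List SymbEvent}
      {z i k a : ℕ} {H' : Heap} {st' : A} :
      MallocFreeRel (σ ++ [SymbEvent.free z]) i (σ.length + 1) →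
      (σ ++ [SymbEvent.free z])[i - 1]? = some (SymbEvent.malloc k) →
      (a, k, i) ∈ Φ →
      α.free H st a = (H', st') →
      Step α Φ H st σ (SymbEvent.free z) H' st' (Φ \ {(a, k, i)})

/-- Sequence feasibility (fast-forward relation), interleaving arbitrary client
updates to client-accessible memory `addrsOf Φ ∪ R` with allocator steps. -/
inductive FF {A : Type} (α : Strategy A) (R : Set ℕ) :
    AllocMap → Heap → A → List SymbEvent → Heap → A → AllocMap → Prop
  | empty {Φ : AllocMap} {H : Heap} {st : A} : FF α R Φ H st [] H st Φ
  | step {Φ : AllocMap} {H : Heap} {st : A} {σ : List SymbEvent}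
      {H' : Heap} {st' : A} {Φ' : AllocMap} {Hu : Heap} {e : SymbEvent}
      {H'' : Heap} {st'' : A} {Φ'' : AllocMap} :
      FF α R Φ H st σ H' st' Φ' →
      (∀ a ∉ addrsOf Φ' ∪ R, Hu a = H' a) →
      Step α Φ' Hu st' σ e H'' st'' Φ'' →
      FF α R Φ H st (σ ++ [e]) H'' st'' Φ''

/-- The bump allocator on the memory segment `[N₁,N₃)` with reserved `[N₁,N₂)`;
its state is the bump pointer. -/
def bump (N₁ N₂ N₃ : ℕ) : Strategy ℕ where
  null := N₂
  init H := ((fun i => if i = N₂ then none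
      else if H i = none ∧ N₂ + 1 ≤ i ∧ i < N₃ then some 0 else H i), N₂ + 1)
  malloc H p s :=
    if 0 < s ∧ p + s ≤ N₃ then (H, p + s, p)
    else if s = 0 ∧ p + 1 ≤ N₃ then (H, p + 1, p)
    else (H, p, N₂)
  free H p _ := (H, p)

/-!
The bump pointer never decreases and a successful allocation returns the current pointer, so
every recorded region ends at or below the pointer and each new region starts above all of them.
-/

structure BumpInv (Φ : AllocMap) (p : ℕ) : Prop where
  end_le : ∀ q ∈ Φ, q.1 + q.2.1 ≤ p
  disjoint : ∀ q ∈ Φ, ∀ r ∈ Φ, q.2.2 ≠ r.2.2 →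
    Disjoint (Set.Ico q.1 (q.1 + q.2.1)) (Set.Ico r.1 (r.1 + r.2.1))

namespace BumpInv

theorem empty (p : ℕ) : BumpInv ∅ p :=
  ⟨fun _ h => h.elim, fun _ h => h.elim⟩

theorem mono {Φ Φ' : AllocMap} {p p' : ℕ} (h : BumpInv Φ p) (hΦ : Φ' ⊆ Φ) (hp : p ≤ p') :
    BumpInv Φ' p' :=
  ⟨fun q hq => (h.end_le q (hΦ hq)).trans hp,
    fun q hq r hr hne => h.disjoint q (hΦ hq) r (hΦ hr) hne⟩

theorem insert {Φ : AllocMap} {p p' k i : ℕ} (h : BumpInv Φ p) (hp : p + k ≤ p') :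
    BumpInv (Φ ∪ {(p, k, i)}) p' := by
  have fresh : ∀ q ∈ Φ, Disjoint (Set.Ico q.1 (q.1 + q.2.1)) (Set.Ico p (p + k)) :=
    fun q hq => Set.disjoint_left.2 fun x hxq hxp => by
      have := h.end_le q hq
      simp only [Set.mem_Ico] at hxq hxp
      omega
  constructor
  · rintro q (hq | rfl)
    · exact (h.end_le q hq).trans (by omega)
    · exact hp
  · rintro q (hq | rfl) r (hr | rfl) hne
    · exact h.disjoint q hq r hr hne
    · exact fresh q hq
    · exact (fresh r hr).symm
    · exact absurd rfl hne

end BumpInv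

section Bump

variable {N₁ N₂ N₃ : ℕ}

theorem bump_malloc_state_le {H H' : Heap} {p p' k a : ℕ}
    (h : (bump N₁ N₂ N₃).malloc H p k = (H', p', a)) : p ≤ p' := by
  simp only [bump] at h
  split_ifs at h <;> simp only [Prod.mk.injEq] at h <;> omega

theorem bump_malloc_of_ne_null {H H' : Heap} {p p' k a : ℕ}
    (h : (bump N₁ N₂ N₃).malloc H p k = (H', p', a)) (ha : a ≠ N₂) :
    a = p ∧ p + k ≤ p' := by
  simp only [bump] at h
  split_ifs at h <;> simp only [Prod.mk.injEq] at h <;> omega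

theorem BumpInv.step {Φ Φ' : AllocMap} {H H' : Heap} {p p' : ℕ} {σ : List SymbEvent}
    {e : SymbEvent} (hstep : Step (bump N₁ N₂ N₃) Φ H p σ e H' p' Φ') (h : BumpInv Φ p) :
    BumpInv Φ' p' := by
  cases hstep with
  | mallocOk hm ha =>
    obtain ⟨rfl, hp⟩ := bump_malloc_of_ne_null hm ha
    exact h.insert hp
  | mallocFail hm => exact h.mono le_rfl (bump_malloc_state_le hm)
  | free _ _ _ hf =>
    cases hf
    exact h.mono Set.sdiff_subset le_rfl

theorem BumpInv.ff {R : Set ℕ} {Φ Φ' : AllocMap} {H H' : Heap} {p p' : ℕ}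
    {σ : List SymbEvent} (hff : FF (bump N₁ N₂ N₃) R Φ H p σ H' p' Φ') (h : BumpInv Φ p) :
    BumpInv Φ' p' := by
  induction hff with
  | empty => exact h
  | step _ _ hstep ih => exact ih.step hstep

end Bump

theorem bump_disjoint_general (N₁ N₂ N₃ : ℕ)
    (H₀ H₁ : Heap) (A₁ : ℕ) (Φ₁ : AllocMap) (σ : List SymbEvent)
    (R : Set ℕ)
    (hff : FF (bump N₁ N₂ N₃) R ∅ H₀ (N₂ + 1) σ H₁ A₁ Φ₁) :
    ∀ a k i a' k' i', (a, k, i) ∈ Φ₁ → (a', k', i') ∈ Φ₁ → i ≠ i' →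
      Set.Ico a (a + k) ∩ Set.Ico a' (a' + k') = ∅ := by
  intro a k i a' k' i' h h' hne
  have hinv : BumpInv Φ₁ A₁ := (BumpInv.empty (N₂ + 1)).ff hff
  exact Set.disjoint_iff_inter_eq_empty.1 (hinv.disjoint _ h _ h' hne)

theorem bump_disjoint (N₁ N₂ N₃ : ℕ)
    (H H₀ H₁ : Heap) (A₁ : ℕ) (Φ₁ : AllocMap) (σ : List SymbEvent)
    (R : Set ℕ) (hR : R = Set.Ico N₁ N₂)
    (hdom : R ⊆ {a | H a ≠ none})
    (hinit : (bump N₁ N₂ N₃).init H = (H₀, N₂ + 1))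
    (hff : FF (bump N₁ N₂ N₃) R ∅ H₀ (N₂ + 1) σ H₁ A₁ Φ₁) :
    ∀ a k i a' k' i', (a, k, i) ∈ Φ₁ → (a', k', i') ∈ Φ₁ → i ≠ i' →
      Set.Ico a (a + k) ∩ Set.Ico a' (a' + k') = ∅ :=
  bump_disjoint_general N₁ N₂ N₃ H₀ H₁ A₁ Φ₁ σ R hff
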